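/- arXiv:1608.06712 — 2 statements merged into one kernel-verified Lean document; each statement's English description precedes it below -/
import Mathlib

section
/- The core action of E ∈ E(F) on a box A commutes with taking 2×2 interchange corner compositions: for any compatible boxes F_{i,j}, F_{i,j+1}, F_{i+1,j}, F_{i+1,j+1} with common left-bottom vertex equal to the target of E, one has {(E⊸F_{i,j})^h, (E⊸F_{i,j+1}); (E⊸F_{i+1,j})^{hv}, (E⊸F_{i+1,j+1})^v} = {F_{i,j}^h, F_{i,j+1}; F_{i+1,j}^{hv}, F_{i+1,j+1}^v}. -/
/-- A (discrete) double groupoid: a set of boxes `B` with two compatible groupoid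
structures, with horizontal edge groupoid `H` and vertical edge groupoid `V`,
both over a common base `P`. -/
structure DGpd (B : Type*) (V : Type*) (H : Type*) (P : Type*) where
  sV : V → P
  eV : V → P
  idV : P → V
  mulV : V → V → V
  invV : V → V
  sH : H → P
  eH : H → P
  idH : P → H
  mulH : H → H → H
  invH : H → H
  t : B → H
  b : B → H
  l : B → V
  r : B → V
  corner_tl : ∀ A, sH (t A) = sV (l A)
  corner_tr : ∀ A, eH (t A) = sV (r A)
  corner_bl : ∀ A, sH (b A) = eV (l A)
  corner_br : ∀ A, eH (b A) = eV (r A)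
  idh : V → B
  idv : H → B
  hc : B → B → B
  vc : B → B → B
  hi : B → B
  vi : B → B
  -- groupoid axioms for V
  sV_id : ∀ p, sV (idV p) = p
  eV_id : ∀ p, eV (idV p) = p
  sV_mul : ∀ g h, eV g = sV h → sV (mulV g h) = sV g
  eV_mul : ∀ g h, eV g = sV h → eV (mulV g h) = eV h
  mulV_assoc : ∀ g h k, eV g = sV h → eV h = sV k →
    mulV (mulV g h) k = mulV g (mulV h k)
  idV_mul : ∀ g, mulV (idV (sV g)) g = g
  mulV_id : ∀ g, mulV g (idV (eV g)) = g
  sV_inv : ∀ g, sV (invV g) = eV g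
  eV_inv : ∀ g, eV (invV g) = sV g
  mulV_inv : ∀ g, mulV g (invV g) = idV (sV g)
  invV_mul : ∀ g, mulV (invV g) g = idV (eV g)
  -- groupoid axioms for H
  sH_id : ∀ p, sH (idH p) = p
  eH_id : ∀ p, eH (idH p) = p
  sH_mul : ∀ x y, eH x = sH y → sH (mulH x y) = sH x
  eH_mul : ∀ x y, eH x = sH y → eH (mulH x y) = eH y
  mulH_assoc : ∀ x y z, eH x = sH y → eH y = sH z →
    mulH (mulH x y) z = mulH x (mulH y z)
  idH_mul : ∀ x, mulH (idH (sH x)) x = x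
  mulH_id : ∀ x, mulH x (idH (eH x)) = x
  sH_inv : ∀ x, sH (invH x) = eH x
  eH_inv : ∀ x, eH (invH x) = sH x
  mulH_inv : ∀ x, mulH x (invH x) = idH (sH x)
  invH_mul : ∀ x, mulH (invH x) x = idH (eH x)
  -- sides of identity boxes
  idh_t : ∀ g, t (idh g) = idH (sV g)
  idh_b : ∀ g, b (idh g) = idH (eV g)
  idh_l : ∀ g, l (idh g) = g
  idh_r : ∀ g, r (idh g) = g
  idv_t : ∀ x, t (idv x) = x
  idv_b : ∀ x, b (idv x) = x
  idv_l : ∀ x, l (idv x) = idV (sH x)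
  idv_r : ∀ x, r (idv x) = idV (eH x)
  -- horizontal groupoid structure on boxes (base V)
  hc_t : ∀ A B, r A = l B → t (hc A B) = mulH (t A) (t B)
  hc_b : ∀ A B, r A = l B → b (hc A B) = mulH (b A) (b B)
  hc_l : ∀ A B, r A = l B → l (hc A B) = l A
  hc_r : ∀ A B, r A = l B → r (hc A B) = r B
  hc_assoc : ∀ A B C, r A = l B → r B = l C → hc (hc A B) C = hc A (hc B C)
  idh_hc : ∀ A, hc (idh (l A)) A = A
  hc_idh : ∀ A, hc A (idh (r A)) = A
  hi_l : ∀ A, l (hi A) = r A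
  hi_r : ∀ A, r (hi A) = l A
  hi_t : ∀ A, t (hi A) = invH (t A)
  hi_b : ∀ A, b (hi A) = invH (b A)
  hc_hi : ∀ A, hc A (hi A) = idh (l A)
  hi_hc : ∀ A, hc (hi A) A = idh (r A)
  -- vertical groupoid structure on boxes (base H)
  vc_t : ∀ A B, b A = t B → t (vc A B) = t A
  vc_b : ∀ A B, b A = t B → b (vc A B) = b B
  vc_l : ∀ A B, b A = t B → l (vc A B) = mulV (l A) (l B)
  vc_r : ∀ A B, b A = t B → r (vc A B) = mulV (r A) (r B)
  vc_assoc : ∀ A B C, b A = t B → b B = t C → vc (vc A B) C = vc A (vc B C)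
  idv_vc : ∀ A, vc (idv (t A)) A = A
  vc_idv : ∀ A, vc A (idv (b A)) = A
  vi_t : ∀ A, t (vi A) = b A
  vi_b : ∀ A, b (vi A) = t A
  vi_l : ∀ A, l (vi A) = invV (l A)
  vi_r : ∀ A, r (vi A) = invV (r A)
  vc_vi : ∀ A, vc A (vi A) = idv (t A)
  vi_vc : ∀ A, vc (vi A) A = idv (b A)
  -- the identity boxes are functorial
  idh_mulV : ∀ g h, eV g = sV h → vc (idh g) (idh h) = idh (mulV g h)
  idv_mulH : ∀ x y, eH x = sH y → hc (idv x) (idv y) = idv (mulH x y)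
  id_id : ∀ p, idh (idV p) = idv (idH p)
  -- the interchange law
  interchange : ∀ K L M N, r K = l L → r M = l N → b K = t M → b L = t N →
    vc (hc K L) (hc M N) = hc (vc K M) (vc L N)

namespace DGpd

variable {B V H P : Type*} (D : DGpd B V H P)

/-- The totally degenerate box at a point. -/
def Theta (p : P) : B := D.idh (D.idV p)

/-- A box all of whose four sides are identities at `p`; i.e. an element of the
fiber `K(B)_p` of the abelian group bundle `K(B)`. -/
def InFiber (p : P) (A : B) : Prop :=
  D.t A = D.idH p ∧ D.b A = D.idH p ∧ D.l A = D.idV p ∧ D.r A = D.idV p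

/-- A box belonging to the core groupoid: its top and right sides are identities. -/
def IsCore (A : B) : Prop :=
  (∃ p, D.t A = D.idH p) ∧ (∃ p, D.r A = D.idV p)

/-- Source of the core groupoid: the bottom-left vertex. -/
def coreSrc (A : B) : P := D.sH (D.b A)

/-- Target of the core groupoid: the top-right vertex. -/
def coreTgt (A : B) : P := D.eH (D.t A)

/-- Core multiplication `E ∘ F`. -/
def coreMul (E F : B) : B :=
  D.vc (D.hc (D.idh (D.l F)) F) (D.hc E (D.idv (D.b F)))

/-- Core inversion `E ↦ E^{(-1)} = (E ⋅ id_v(b(E)^{-1}))^v`. -/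
def coreInv (E : B) : B := D.vi (D.hc E (D.idv (D.invH (D.b E))))

/-- The core action of the core groupoid on boxes:
`E ⊸ A = {(id l(A), A) over (E, id b(A))}`. -/
def coreAct (E A : B) : B :=
  D.vc (D.hc (D.idh (D.l A)) A) (D.hc E (D.idv (D.b A)))

end DGpd

/-!
Since `E` is a core box, `E ⊸ A` is `A` stacked on the strip `E ⊞ id_v(b A)`, whose top side is
`b A` again. By the interchange law, the top row of the corner composite of the `E ⊸ F_{ij}` is
the original top row stacked on `(E ⊞ id_v x)^h ⊞ (E ⊞ id_v y)`, where `x`, `y` are the bottom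
sides of the two columns, and the bottom row is the original one with the vertical inverse of
that box on top. As the right side of `E` is an identity, `E^h ⊞ E` is the identity box `Θ`, so
this box collapses to the vertical identity on `x⁻¹ y`, which is absorbed.
-/

namespace DGpd

variable {B V H P : Type*} (D : DGpd B V H P)

lemma hi_unique {A C : B} (hAC : D.r A = D.l C) (h : D.hc A C = D.idh (D.l A)) :
    C = D.hi A := by
  calc C = D.hc (D.idh (D.r A)) C := by rw [hAC, D.idh_hc]
    _ = D.hc (D.hc (D.hi A) A) C := by rw [D.hi_hc]
    _ = D.hc (D.hi A) (D.idh (D.l A)) := by rw [D.hc_assoc _ _ _ (D.hi_r A) hAC, h]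
    _ = D.hi A := by rw [← D.hi_r, D.hc_idh]

lemma vi_unique {A C : B} (hAC : D.b A = D.t C) (h : D.vc A C = D.idv (D.t A)) :
    C = D.vi A := by
  calc C = D.vc (D.idv (D.b A)) C := by rw [hAC, D.idv_vc]
    _ = D.vc (D.vc (D.vi A) A) C := by rw [D.vi_vc]
    _ = D.vc (D.vi A) (D.idv (D.t A)) := by rw [D.vc_assoc _ _ _ (D.vi_b A) hAC, h]
    _ = D.vi A := by rw [← D.vi_b, D.vc_idv]

lemma hi_vc {K M : B} (h : D.b K = D.t M) :
    D.hi (D.vc K M) = D.vc (D.hi K) (D.hi M) := by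
  have hKM' : D.b (D.hi K) = D.t (D.hi M) := by rw [D.hi_b, D.hi_t, h]
  refine (D.hi_unique ?_ ?_).symm
  · rw [D.vc_r _ _ h, D.vc_l _ _ hKM', D.hi_l, D.hi_l]
  · rw [← D.interchange _ _ _ _ (D.hi_l K).symm (D.hi_l M).symm h hKM', D.hc_hi, D.hc_hi,
      D.idh_mulV _ _ (by rw [← D.corner_bl, ← D.corner_tl, h]), D.vc_l _ _ h]

lemma vi_hc {K L : B} (h : D.r K = D.l L) :
    D.vi (D.hc K L) = D.hc (D.vi K) (D.vi L) := by
  have hKL' : D.r (D.vi K) = D.l (D.vi L) := by rw [D.vi_r, D.vi_l, h]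
  refine (D.vi_unique ?_ ?_).symm
  · rw [D.hc_b _ _ h, D.hc_t _ _ hKL', D.vi_t, D.vi_t]
  · rw [D.interchange _ _ _ _ h hKL' (D.vi_t K).symm (D.vi_t L).symm, D.vc_vi, D.vc_vi,
      D.idv_mulH _ _ (by rw [D.corner_tr, D.corner_tl, h]), D.hc_t _ _ h]

lemma hi_hc_rev {K L : B} (h : D.r K = D.l L) :
    D.hi (D.hc K L) = D.hc (D.hi L) (D.hi K) := by
  have hLK' : D.r (D.hi L) = D.l (D.hi K) := by rw [D.hi_r, D.hi_l, h]
  refine (D.hi_unique ?_ ?_).symm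
  · rw [D.hc_r _ _ h, D.hc_l _ _ hLK', D.hi_l]
  · rw [D.hc_assoc _ _ _ h (by rw [D.hc_l _ _ hLK', D.hi_l]),
      ← D.hc_assoc L _ _ (D.hi_l L).symm hLK', D.hc_hi L, ← h, ← D.hi_l K,
      D.idh_hc, D.hc_hi, D.hc_l _ _ h]

lemma vi_vc_rev {K M : B} (h : D.b K = D.t M) :
    D.vi (D.vc K M) = D.vc (D.vi M) (D.vi K) := by
  have hMK' : D.b (D.vi M) = D.t (D.vi K) := by rw [D.vi_b, D.vi_t, h]
  refine (D.vi_unique ?_ ?_).symm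
  · rw [D.vc_b _ _ h, D.vc_t _ _ hMK', D.vi_t]
  · rw [D.vc_assoc _ _ _ h (by rw [D.vc_t _ _ hMK', D.vi_t]),
      ← D.vc_assoc M _ _ (D.vi_t M).symm hMK', D.vc_vi M, ← h, ← D.vi_t K,
      D.idv_vc, D.vc_vi, D.vc_t _ _ h]

lemma hi_idv (x : H) : D.hi (D.idv x) = D.idv (D.invH x) := by
  refine (D.hi_unique ?_ ?_).symm
  · rw [D.idv_r, D.idv_l, D.sH_inv]
  · rw [D.idv_mulH _ _ (D.sH_inv x).symm, D.mulH_inv, ← D.id_id, D.idv_l]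

lemma vi_idv (x : H) : D.vi (D.idv x) = D.idv x := by
  refine (D.vi_unique ?_ ?_).symm
  · rw [D.idv_b, D.idv_t]
  · simpa only [D.idv_b, D.idv_t] using D.vc_idv (D.idv x)

lemma b_hc_hi {A A' : B} (h : D.l A = D.l A') :
    D.b (D.hc (D.hi A) A') = D.mulH (D.invH (D.b A)) (D.b A') := by
  rw [D.hc_b _ _ (by rw [D.hi_r, h]), D.hi_b]

lemma t_hc_vi_hi {A A' : B} (h : D.l A = D.l A') :
    D.t (D.hc (D.vi (D.hi A)) (D.vi A')) = D.mulH (D.invH (D.b A)) (D.b A') := by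
  rw [D.hc_t _ _ (by rw [D.vi_r, D.hi_r, D.vi_l, h]), D.vi_t, D.hi_b, D.vi_t]

lemma hc_hi_vc {A A' X Y : B} (hA : D.b A = D.t X) (hA' : D.b A' = D.t Y)
    (hl : D.l A = D.l A') (hlXY : D.l X = D.l Y) :
    D.hc (D.hi (D.vc A X)) (D.vc A' Y) = D.vc (D.hc (D.hi A) A') (D.hc (D.hi X) Y) := by
  rw [D.hi_vc hA, ← D.interchange _ _ _ _ (by rw [D.hi_r, hl]) (by rw [D.hi_r, hlXY])
    (by rw [D.hi_b, D.hi_t, hA]) hA']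

lemma hc_vi_hi_vc {A A' X Y : B} (hA : D.b A = D.t X) (hA' : D.b A' = D.t Y)
    (hl : D.l A = D.l A') (hlXY : D.l X = D.l Y) :
    D.hc (D.vi (D.hi (D.vc A X))) (D.vi (D.vc A' Y)) =
      D.vc (D.hc (D.vi (D.hi X)) (D.vi Y)) (D.hc (D.vi (D.hi A)) (D.vi A')) := by
  have hAX' : D.b (D.hi A) = D.t (D.hi X) := by rw [D.hi_b, D.hi_t, hA]
  rw [D.hi_vc hA, D.vi_vc_rev hAX', D.vi_vc_rev hA', ← D.interchange _ _ _ _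
    (by rw [D.vi_r, D.hi_r, D.vi_l, hlXY]) (by rw [D.vi_r, D.hi_r, D.vi_l, hl])
    (by rw [D.vi_b, D.vi_t, hAX']) (by rw [D.vi_b, D.vi_t, hA'])]

lemma hc_hi_hc_idv {K : B} {x y : H} (hK : D.r K = D.idV (D.sH x)) (hxy : D.sH y = D.sH x) :
    D.hc (D.hi (D.hc K (D.idv x))) (D.hc K (D.idv y)) = D.idv (D.mulH (D.invH x) y) := by
  have hKx : D.r K = D.l (D.idv x) := by rw [D.idv_l, hK]
  have hKy : D.r K = D.l (D.idv y) := by rw [D.idv_l, hK, hxy]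
  rw [D.hi_hc_rev hKx, D.hi_idv,
    D.hc_assoc _ _ _ (by rw [D.idv_r, D.eH_inv, D.hi_l, hK]) (by rw [D.hi_r, D.hc_l _ _ hKy]),
    ← D.hc_assoc _ _ _ (D.hi_r K) hKy, D.hi_hc, hKy, D.idh_hc,
    D.idv_mulH _ _ (by rw [D.eH_inv, hxy])]

lemma coreAct_eq (E A : B) : D.coreAct E A = D.vc A (D.hc E (D.idv (D.b A))) := by
  rw [coreAct, idh_hc]

variable {D}

lemma IsCore.t_eq {E : B} (hE : D.IsCore E) : D.t E = D.idH (D.coreTgt E) := by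
  obtain ⟨⟨p, hp⟩, -⟩ := hE
  rw [coreTgt, hp, D.eH_id]

lemma IsCore.r_eq {E : B} (hE : D.IsCore E) : D.r E = D.idV (D.coreTgt E) := by
  obtain ⟨-, ⟨q, hq⟩⟩ := hE
  rw [coreTgt, D.corner_tr, hq, D.sV_id]

lemma IsCore.t_hc_idv {E : B} (hE : D.IsCore E) {x : H} (hx : D.sH x = D.coreTgt E) :
    D.t (D.hc E (D.idv x)) = x := by
  rw [D.hc_t _ _ (by rw [hE.r_eq, D.idv_l, hx]), D.idv_t, hE.t_eq, ← hx, D.idH_mul]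

lemma IsCore.l_hc_idv {E : B} (hE : D.IsCore E) {x : H} (hx : D.sH x = D.coreTgt E) :
    D.l (D.hc E (D.idv x)) = D.l E :=
  D.hc_l _ _ (by rw [hE.r_eq, D.idv_l, hx])

end DGpd

section Stmt16

variable {B V H P : Type*}

/-- The 2×2 interchange corner composition
`{F₀₀^h, F₀₁ ; F₁₀^{hv}, F₁₁^v}` (compose horizontally, then vertically). -/
def corner2x2 (D : DGpd B V H P) (F00 F01 F10 F11 : B) : B :=
  D.vc (D.hc (D.hi F00) F01) (D.hc (D.vi (D.hi F10)) (D.vi F11))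

/-- The core action commutes with taking 2×2 interchange corner
compositions: for compatible boxes with common left-bottom vertex equal to the target
of the core element `E`, acting by `E` entrywise does not change the corner
composite. -/
theorem coreAct_corner2x2 (D : DGpd B V H P) (E F00 F01 F10 F11 : B)
    (hE : D.IsCore E)
    -- boxes in a fixed row have the same left side
    (h00 : D.l F00 = D.l F01) (h10 : D.l F10 = D.l F11)
    -- boxes in a fixed column have the same bottom side
    (h0 : D.b F00 = D.b F10) (h1 : D.b F01 = D.b F11)
    -- the common left-bottom vertex is the target of `E`
    (hv : D.eV (D.l F00) = D.coreTgt E) :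
    corner2x2 D (D.coreAct E F00) (D.coreAct E F01)
        (D.coreAct E F10) (D.coreAct E F11) =
      corner2x2 D F00 F01 F10 F11 := by
  have s00 : D.sH (D.b F00) = D.coreTgt E := (D.corner_bl F00).trans hv
  have s01 : D.sH (D.b F01) = D.coreTgt E := by rw [D.corner_bl, ← h00, hv]
  have s10 : D.sH (D.b F10) = D.coreTgt E := h0 ▸ s00
  have s11 : D.sH (D.b F11) = D.coreTgt E := h1 ▸ s01
  have hr : ∀ {x : H}, D.sH x = D.coreTgt E → D.r E = D.idV (D.sH x) := fun hx => by
    rw [hE.r_eq, hx]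
  have top := D.hc_hi_vc (hE.t_hc_idv s00).symm (hE.t_hc_idv s01).symm h00
    (by rw [hE.l_hc_idv s00, hE.l_hc_idv s01])
  have bottom := D.hc_vi_hi_vc (hE.t_hc_idv s10).symm (hE.t_hc_idv s11).symm h10
    (by rw [hE.l_hc_idv s10, hE.l_hc_idv s11])
  rw [corner2x2, corner2x2, D.coreAct_eq, D.coreAct_eq, D.coreAct_eq, D.coreAct_eq, top, bottom,
    D.hc_hi_hc_idv (hr s00) (s01.trans s00.symm), ← D.b_hc_hi h00, D.vc_idv,
    ← D.vi_hc (by rw [D.hi_r, hE.l_hc_idv s10, hE.l_hc_idv s11]),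
    D.hc_hi_hc_idv (hr s10) (s11.trans s10.symm), D.vi_idv, ← D.t_hc_vi_hi h10, D.idv_vc]

end Stmt16
end

section
/- Every open cover of a bisimplicial space admits a bisimplicial refinement: given a bisimplicial space M_{••} and an arbitrary open cover U_{••} (each U_{(m,n)} = {U_i^{m,n}}_{i∈I_{m,n}} covering M_{m,n}), the sets V_λ^{m,n} = ⋂_{(k,l)≤(m,n)} ⋂_{f∈P_{m,n}^{k,l}} f̃^{-1}(U_{λ(f)}^{k,l}), indexed by functions λ assigning to each injective bi-order-morphism f: ([k],[l])→([m],[n]) an index λ(f) ∈ I_{k,l}, form an open cover of M_{m,n}, and the resulting indexed family is a bisimplicial open cover refining U_{••}. -/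
universe u

/-- A (semi)bisimplicial topological space: a family of spaces `M m n` with
contravariant, continuous structure maps associated to pairs of strictly increasing
maps `([k],[l]) → ([m],[n])` (these suffice to state the refinement theorem). -/
structure BisimpSpace where
  M : ℕ → ℕ → Type u
  top : ∀ m n, TopologicalSpace (M m n)
  act : ∀ {k l m n : ℕ},
    (Fin (k + 1) → Fin (m + 1)) → (Fin (l + 1) → Fin (n + 1)) → M m n → M k l
  act_cont : ∀ {k l m n : ℕ} (f1 : Fin (k + 1) → Fin (m + 1))
    (f2 : Fin (l + 1) → Fin (n + 1)), StrictMono f1 → StrictMono f2 →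
    @Continuous _ _ (top m n) (top k l) (act f1 f2)
  act_id : ∀ (m n : ℕ) (x : M m n), act (fun i => i) (fun j => j) x = x
  act_comp : ∀ {k l m n m' n' : ℕ}
    (f1 : Fin (k + 1) → Fin (m + 1)) (f2 : Fin (l + 1) → Fin (n + 1))
    (g1 : Fin (m + 1) → Fin (m' + 1)) (g2 : Fin (n + 1) → Fin (n' + 1)),
    StrictMono f1 → StrictMono f2 → StrictMono g1 → StrictMono g2 →
    ∀ x : M m' n', act f1 f2 (act g1 g2 x) = act (g1 ∘ f1) (g2 ∘ f2) x

/-- An injective bi-order-morphism `([k],[l]) → ([m],[n])`: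
a pair of strictly increasing maps. -/
def SMPair (k l m n : ℕ) : Type :=
  {f : (Fin (k + 1) → Fin (m + 1)) × (Fin (l + 1) → Fin (n + 1)) //
    StrictMono f.1 ∧ StrictMono f.2}

/-- The index set `Λ_{m,n}`: functions assigning to each injective bi-order-morphism
`f : ([k],[l]) → ([m],[n])` an index `λ(f) ∈ I_{k,l}`. -/
def Lam (I : ℕ → ℕ → Type u) (m n : ℕ) : Type u :=
  ∀ (k l : ℕ), SMPair k l m n → I k l

/-- The set `V_λ^{m,n} = ⋂_{(k,l)} ⋂_{f} f̃⁻¹(U_{λ(f)}^{k,l})`. -/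
def Vset (X : BisimpSpace.{u}) {I : ℕ → ℕ → Type u}
    (U : ∀ m n, I m n → Set (X.M m n)) (m n : ℕ) (lam : Lam I m n) :
    Set (X.M m n) :=
  ⋂ (k : ℕ) (l : ℕ) (f : SMPair k l m n),
    X.act f.val.1 f.val.2 ⁻¹' (U k l (lam k l f))

/-- The induced (bisimplicial) structure map on the index sets `Λ`. -/
def lamMap {I : ℕ → ℕ → Type u} {k l m n : ℕ} (g : SMPair k l m n)
    (lam : Lam I m n) : Lam I k l := fun k' l' f =>
  lam k' l' ⟨(g.val.1 ∘ f.val.1, g.val.2 ∘ f.val.2),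
    ⟨g.prop.1.comp f.prop.1, g.prop.2.comp f.prop.2⟩⟩

/-! Each `V_λ` is open because the intersection defining it is finite: a strictly increasing
map `[k] → [m]` forces `k ≤ m`. A point `x` lies in `V_λ` for `λ(f)` any index of an open set
containing `f̃ x`; taking `f = id` gives the refinement, and `f̃ ∘ g̃ = (g ∘ f)~` gives
`g̃(V_λ) ⊆ V_{g̃(λ)}`. -/

namespace SMPair

instance finite (k l m n : ℕ) : Finite (SMPair k l m n) := by
  unfold SMPair; infer_instance

lemma le {k l m n : ℕ} (f : SMPair k l m n) : k ≤ m ∧ l ≤ n :=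
  ⟨Nat.succ_le_succ_iff.1 (Fin.le_of_injective _ f.prop.1.injective),
    Nat.succ_le_succ_iff.1 (Fin.le_of_injective _ f.prop.2.injective)⟩

def id (m n : ℕ) : SMPair m n m n :=
  ⟨(fun i => i, fun j => j), ⟨strictMono_id, strictMono_id⟩⟩

def comp {k l m n k' l' : ℕ} (g : SMPair k l m n) (f : SMPair k' l' k l) :
    SMPair k' l' m n :=
  ⟨(g.val.1 ∘ f.val.1, g.val.2 ∘ f.val.2),
    ⟨g.prop.1.comp f.prop.1, g.prop.2.comp f.prop.2⟩⟩

end SMPair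

section Vset

variable {X : BisimpSpace.{u}} {I : ℕ → ℕ → Type u} {U : ∀ m n, I m n → Set (X.M m n)}

lemma BisimpSpace.act_act {k l m n m' n' : ℕ} (g : SMPair m n m' n') (f : SMPair k l m n)
    (x : X.M m' n') :
    X.act f.val.1 f.val.2 (X.act g.val.1 g.val.2 x) =
      X.act (g.comp f).val.1 (g.comp f).val.2 x :=
  X.act_comp _ _ _ _ f.prop.1 f.prop.2 g.prop.1 g.prop.2 x

lemma mem_Vset_iff {m n : ℕ} {lam : Lam I m n} {x : X.M m n} :
    x ∈ Vset X U m n lam ↔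
      ∀ k l (f : SMPair k l m n), X.act f.val.1 f.val.2 x ∈ U k l (lam k l f) := by
  simp only [Vset, Set.mem_iInter, Set.mem_preimage]

lemma Vset_eq_iInter_fin (m n : ℕ) (lam : Lam I m n) :
    Vset X U m n lam = ⋂ (k : Fin (m + 1)) (l : Fin (n + 1)) (f : SMPair k l m n),
      X.act f.val.1 f.val.2 ⁻¹' U k l (lam k l f) := by
  ext x
  simp only [mem_Vset_iff, Set.mem_iInter, Set.mem_preimage]
  refine ⟨fun h k l f => h k l f, fun h k l f => ?_⟩
  exact h ⟨k, Nat.lt_succ_of_le f.le.1⟩ ⟨l, Nat.lt_succ_of_le f.le.2⟩ f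

lemma isOpen_Vset (hopen : ∀ m n i, @IsOpen _ (X.top m n) (U m n i)) (m n : ℕ)
    (lam : Lam I m n) :
    @IsOpen _ (X.top m n) (Vset X U m n lam) := by
  let _ := X.top m n
  rw [Vset_eq_iInter_fin]
  refine isOpen_iInter_of_finite fun k => isOpen_iInter_of_finite fun l =>
    isOpen_iInter_of_finite fun f => ?_
  let _ := X.top k l
  exact (hopen _ _ _).preimage (X.act_cont _ _ f.prop.1 f.prop.2)

lemma exists_mem_Vset (hcover : ∀ m n (x : X.M m n), ∃ i, x ∈ U m n i) {m n : ℕ}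
    (x : X.M m n) :
    ∃ lam : Lam I m n, x ∈ Vset X U m n lam := by
  choose i hi using hcover
  exact ⟨fun k l f => i k l (X.act f.val.1 f.val.2 x), mem_Vset_iff.2 fun k l f => hi _ _ _⟩

lemma Vset_subset_id {m n : ℕ} (lam : Lam I m n) :
    Vset X U m n lam ⊆ U m n (lam m n (SMPair.id m n)) := fun x hx => by
  simpa only [SMPair.id, X.act_id] using mem_Vset_iff.1 hx m n (SMPair.id m n)

lemma image_act_Vset_subset {k l m n : ℕ} (g : SMPair k l m n) (lam : Lam I m n) :
    X.act g.val.1 g.val.2 '' Vset X U m n lam ⊆ Vset X U k l (lamMap g lam) := by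
  rintro _ ⟨x, hx, rfl⟩
  refine mem_Vset_iff.2 fun k' l' f => ?_
  rw [BisimpSpace.act_act]
  exact mem_Vset_iff.1 hx k' l' (g.comp f)

end Vset

/-- Every open cover of a bisimplicial space admits a bisimplicial
refinement: the sets `V_λ^{m,n}` are open and cover `M_{m,n}`, the resulting cover
refines the original one, and it is bisimplicial: the structure maps send `V_λ` into
`V_{g̃(λ)}` where `g̃(λ)(f) = λ(g ∘ f)`. -/
theorem bisimplicial_refinement_of_open_cover
    (X : BisimpSpace.{u}) (I : ℕ → ℕ → Type u)
    (U : ∀ m n, I m n → Set (X.M m n))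
    (hopen : ∀ m n i, @IsOpen _ (X.top m n) (U m n i))
    (hcover : ∀ m n (x : X.M m n), ∃ i, x ∈ U m n i) :
    -- each V_λ is open
    (∀ m n (lam : Lam I m n), @IsOpen _ (X.top m n) (Vset X U m n lam)) ∧
    -- the V_λ cover M_{m,n}
    (∀ m n (x : X.M m n), ∃ lam : Lam I m n, x ∈ Vset X U m n lam) ∧
    -- the new cover refines the old one
    (∀ m n (lam : Lam I m n),
      Vset X U m n lam ⊆
        U m n (lam m n ⟨(fun i => i, fun j => j),
          ⟨strictMono_id, strictMono_id⟩⟩)) ∧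
    -- the cover is bisimplicial
    (∀ k l m n (g : SMPair k l m n) (lam : Lam I m n),
      X.act g.val.1 g.val.2 '' Vset X U m n lam ⊆
        Vset X U k l (lamMap g lam)) :=
  ⟨isOpen_Vset hopen, fun _ _ => exists_mem_Vset hcover, fun _ _ => Vset_subset_id,
    fun _ _ _ _ => image_act_Vset_subset⟩
end
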